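/- arXiv:math/0107023 — 3 statements merged into one kernel-verified Lean document; each statement's English description precedes it below -/
import Mathlib

section
/- For every z ∈ Ξ, the set M_z = {G_z(φ,g) : φ ∈ Φ, g ∈ Δ_z} is a group under matrix multiplication: G_z(0,0) = I, M_z is closed under multiplication, and for every φ ∈ Φ, g ∈ Δ_z one has G_z(φ,g) · G_z(−φ,−g) = I, so G_z(φ,g)⁻¹ = G_z(−φ,−g) ∈ M_z. -/
open Polynomial Matrix

noncomputable section

/-- The matrix `D = diag(-1,1,...,1)` of size `ν × ν` with `ν = n + 2`. -/
def Dm (n : ℕ) : Matrix (Fin (n + 2)) (Fin (n + 2)) ℂ :=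
  Matrix.diagonal fun i => if i = 0 then -1 else 1

/-- Coefficientwise complex conjugation of a scalar polynomial (`ω` treated as real). -/
def cstar (p : ℂ[X]) : ℂ[X] := p.map (starRingEnd ℂ)

/-- Polynomial matrices of size `(n+2) × (n+2)`. -/
abbrev PM (n : ℕ) := Matrix (Fin (n + 2)) (Fin (n + 2)) ℂ[X]

/-- `U(ω)* = Σ Uι* ωⁱ` : coefficientwise conjugate transpose of a polynomial matrix. -/
def Mstar (n : ℕ) (U : PM n) : PM n := Matrix.of fun i j => cstar (U j i)

/-- The scalar polynomial `g(ω)* h(ω)` for vector polynomials `g, h`. -/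
def pdot (n : ℕ) (g h : Fin (n + 2) → ℂ[X]) : ℂ[X] := ∑ i, cstar (g i) * h i

/-- `Ξ = {z : z₁ = 1, z* D z = 0}`. -/
def Xi (n : ℕ) : Set (Fin (n + 2) → ℂ) :=
  {z | z 0 = 1 ∧ star z ⬝ᵥ (Dm n).mulVec z = 0}

/-- `Δ_z⁰ = {d : d* z = d* D z = 0}`. -/
def Delta0 (n : ℕ) (z : Fin (n + 2) → ℂ) : Set (Fin (n + 2) → ℂ) :=
  {d | star d ⬝ᵥ z = 0 ∧ star d ⬝ᵥ (Dm n).mulVec z = 0}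

/-- `Φ = {φ : φ(0) = 0, φ* = -φ}`. -/
def Phi : Set ℂ[X] := {φ | φ.eval 0 = 0 ∧ cstar φ = -φ}

/-- `Δ_z` : vector polynomials vanishing at 0 with all coefficient vectors in `Δ_z⁰`. -/
def DeltaZ (n : ℕ) (z : Fin (n + 2) → ℂ) : Set (Fin (n + 2) → ℂ[X]) :=
  {g | (∀ i, (g i).eval 0 = 0) ∧ ∀ k : ℕ, (fun i => (g i).coeff k) ∈ Delta0 n z}

/-- `G_z(φ,g) = D·[z(φ - (1/2)g*g)z* + (zg* - gz*)] + I`. -/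
def Gmat (n : ℕ) (z : Fin (n + 2) → ℂ) (φ : ℂ[X]) (g : Fin (n + 2) → ℂ[X]) : PM n :=
  (Dm n).map Polynomial.C *
      Matrix.of (fun i j =>
        Polynomial.C (z i) * (φ - Polynomial.C (1 / 2 : ℂ) * pdot n g g) *
            Polynomial.C (star (z j)) +
          (Polynomial.C (z i) * cstar (g j) - g i * Polynomial.C (star (z j)))) +
    1

/-- `M` : the group of polynomial matrices with `U(ω) D U(ω)* = D`. -/
def MM (n : ℕ) : Set (PM n) :=
  {U | U * (Dm n).map Polynomial.C * Mstar n U = (Dm n).map Polynomial.C}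

/-- `M₀ = {U ∈ M : U(0) = I}`. -/
def M0 (n : ℕ) : Set (PM n) :=
  {U | U ∈ MM n ∧ U.map (fun p => p.eval 0) = 1}

/-- `M_z = {G_z(φ,g) : φ ∈ Φ, g ∈ Δ_z}`. -/
def Mz (n : ℕ) (z : Fin (n + 2) → ℂ) : Set (PM n) :=
  {U | ∃ φ ∈ Phi, ∃ g ∈ DeltaZ n z, U = Gmat n z φ g}

/-- `Ψ_z = {G_z(φ,0) : φ ∈ Φ}`. -/
def Psi (n : ℕ) (z : Fin (n + 2) → ℂ) : Set (PM n) :=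
  {U | ∃ φ ∈ Phi, U = Gmat n z φ 0}

/-- Degree of a polynomial matrix: the largest `ι` with a nonzero coefficient `ω^ι`. -/
def degPM (n : ℕ) (U : PM n) : ℕ :=
  Finset.univ.sup fun p : Fin (n + 2) × Fin (n + 2) => (U p.1 p.2).natDegree


/-!
Write `G_z(φ,g) = D N + I` with `N = ψ zz* + zg* − gz*` and `ψ = φ − g*g/2`. Then
`(D N₁ + I)(D N₂ + I) = D (N₁ D N₂ + N₁ + N₂) + I`. Since `z` is `D`-isotropic, every `g ∈ Δ_z`
is `D`-orthogonal to `z`, and the first coordinate of `g` vanishes (from `g*z = g*Dz = 0` and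
`z₁ = 1`) so that `Dg = g`, all cross terms of `N₁ D N₂` vanish except `−(g₁*g₂) zz*`. Hence
`G_z(φ₁,g₁) G_z(φ₂,g₂) = G_z(φ₁ + φ₂ + (g₂*g₁ − g₁*g₂)/2, g₁ + g₂)`, and the new `φ` is again
skew since `g₂*g₁ = (g₁*g₂)*`.
-/

section NilTerm

variable {R ι : Type*} [CommRing R] [Fintype ι]

theorem vecMulVec_mul_mul_vecMulVec (x y u v : ι → R) (D : Matrix ι ι R) :
    vecMulVec x y * D * vecMulVec u v = (y ⬝ᵥ D *ᵥ u) • vecMulVec x v := by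
  rw [Matrix.mul_assoc, mul_vecMulVec, vecMulVec_mul_vecMulVec, vecMulVec_smul]

/-- The covectors `z'`, `g'` stand for `z*`, `g*`, so that
`G_z(φ,g) = D · nilTerm (φ - g*g/2) z z* g g* + I`. -/
def nilTerm (ψ : R) (z z' g g' : ι → R) : Matrix ι ι R :=
  ψ • vecMulVec z z' + vecMulVec z g' - vecMulVec g z'

theorem nilTerm_mul_mul_nilTerm (D : Matrix ι ι R) (ψ₁ ψ₂ : R) {z z' g₁ g₁' g₂ g₂' : ι → R}
    (hzz : z' ⬝ᵥ D *ᵥ z = 0) (hgz : g₁' ⬝ᵥ D *ᵥ z = 0) (hzg : z' ⬝ᵥ D *ᵥ g₂ = 0) :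
    nilTerm ψ₁ z z' g₁ g₁' * D * nilTerm ψ₂ z z' g₂ g₂' =
      -(g₁' ⬝ᵥ D *ᵥ g₂) • vecMulVec z z' := by
  simp only [nilTerm, add_mul, sub_mul, mul_add, mul_sub, Matrix.smul_mul, Matrix.mul_smul,
    vecMulVec_mul_mul_vecMulVec, hzz, hgz, hzg, zero_smul, smul_zero, neg_smul]
  abel

omit [Fintype ι] in
theorem nilTerm_add (ψ₁ ψ₂ : R) (z z' g₁ g₁' g₂ g₂' : ι → R) :
    nilTerm ψ₁ z z' g₁ g₁' + nilTerm ψ₂ z z' g₂ g₂' =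
      nilTerm (ψ₁ + ψ₂) z z' (g₁ + g₂) (g₁' + g₂') := by
  simp only [nilTerm, add_smul, vecMulVec_add, add_vecMulVec]
  abel

theorem mul_add_one_mul_mul_add_one {A : Type*} [Ring A] (d a b : A) :
    (d * a + 1) * (d * b + 1) = d * (a * d * b + a + b) + 1 := by
  noncomm_ring

theorem nilTerm_group_law [DecidableEq ι] (D : Matrix ι ι R) (ψ₁ ψ₂ : R)
    {z z' g₁ g₁' g₂ g₂' : ι → R}
    (hzz : z' ⬝ᵥ D *ᵥ z = 0) (hgz : g₁' ⬝ᵥ D *ᵥ z = 0) (hzg : z' ⬝ᵥ D *ᵥ g₂ = 0) :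
    (D * nilTerm ψ₁ z z' g₁ g₁' + 1) * (D * nilTerm ψ₂ z z' g₂ g₂' + 1) =
      D * nilTerm (ψ₁ + ψ₂ - g₁' ⬝ᵥ D *ᵥ g₂) z z' (g₁ + g₂) (g₁' + g₂') + 1 := by
  rw [mul_add_one_mul_mul_add_one, nilTerm_mul_mul_nilTerm D ψ₁ ψ₂ hzz hgz hzg, add_assoc,
    nilTerm_add]
  congr 2
  simp only [nilTerm, sub_smul, neg_smul]
  abel

end NilTerm

section ConstantCoefficients

variable {m : Type*} [Fintype m]

theorem map_C_mulVec_comp_C (M : Matrix m m ℂ) (v : m → ℂ) :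
    M.map C *ᵥ (C ∘ v) = C ∘ (M *ᵥ v) :=
  funext fun i => (RingHom.map_mulVec C M v i).symm

theorem coeff_comp_C_dotProduct (a : m → ℂ) (v : m → ℂ[X]) (k : ℕ) :
    ((C ∘ a) ⬝ᵥ v).coeff k = a ⬝ᵥ fun i => (v i).coeff k := by
  simp [dotProduct, Polynomial.finsetSum_coeff]

theorem coeff_cstar_comp_dotProduct_comp_C (v : m → ℂ[X]) (a : m → ℂ) (k : ℕ) :
    ((cstar ∘ v) ⬝ᵥ (C ∘ a)).coeff k = star (fun i => (v i).coeff k) ⬝ᵥ a := by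
  simp [dotProduct, Polynomial.finsetSum_coeff, cstar]

theorem cstar_cstar (p : ℂ[X]) : cstar (cstar p) = p :=
  Polynomial.ext fun k => by simp [cstar]

end ConstantCoefficients

section Mz

variable {n : ℕ} {z : Fin (n + 2) → ℂ}

theorem pdot_eq_dotProduct (g h : Fin (n + 2) → ℂ[X]) : pdot n g h = (cstar ∘ g) ⬝ᵥ h := rfl

theorem cstar_comp_add (g₁ g₂ : Fin (n + 2) → ℂ[X]) :
    cstar ∘ (g₁ + g₂) = cstar ∘ g₁ + cstar ∘ g₂ :=
  funext fun _ => Polynomial.map_add _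

theorem pdot_add_add (g₁ g₂ : Fin (n + 2) → ℂ[X]) :
    pdot n (g₁ + g₂) (g₁ + g₂) = pdot n g₁ g₁ + pdot n g₁ g₂ + pdot n g₂ g₁ + pdot n g₂ g₂ := by
  simp only [pdot_eq_dotProduct, cstar_comp_add, add_dotProduct, dotProduct_add]
  ring

theorem cstar_pdot (g h : Fin (n + 2) → ℂ[X]) : cstar (pdot n g h) = pdot n h g := by
  rw [pdot, cstar, Polynomial.map_sum]
  refine Finset.sum_congr rfl fun i _ => ?_
  rw [Polynomial.map_mul, ← cstar, ← cstar, cstar_cstar, mul_comm]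

theorem eval_zero_pdot_of_left {g : Fin (n + 2) → ℂ[X]} (hg : ∀ i, (g i).eval 0 = 0)
    (h : Fin (n + 2) → ℂ[X]) : (pdot n g h).eval 0 = 0 := by
  simp [pdot, cstar, eval_finsetSum, eval_zero_map, hg]

theorem eval_zero_pdot_of_right (g : Fin (n + 2) → ℂ[X]) {h : Fin (n + 2) → ℂ[X]}
    (hh : ∀ i, (h i).eval 0 = 0) : (pdot n g h).eval 0 = 0 := by
  simp [pdot, eval_finsetSum, hh]

theorem zero_mem_Phi : (0 : ℂ[X]) ∈ Phi := ⟨eval_zero, by simp [cstar]⟩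

theorem neg_mem_Phi {φ : ℂ[X]} (hφ : φ ∈ Phi) : -φ ∈ Phi :=
  ⟨by simp [hφ.1], by rw [cstar, Polynomial.map_neg, ← cstar, hφ.2]⟩

theorem add_mem_Phi {φ₁ φ₂ : ℂ[X]} (hφ₁ : φ₁ ∈ Phi) (hφ₂ : φ₂ ∈ Phi) : φ₁ + φ₂ ∈ Phi :=
  ⟨by simp [hφ₁.1, hφ₂.1],
    by rw [cstar, Polynomial.map_add, ← cstar, ← cstar, hφ₁.2, hφ₂.2, neg_add]⟩

theorem half_mul_pdot_sub_pdot_mem_Phi {g₁ : Fin (n + 2) → ℂ[X]}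
    (hg₁ : ∀ i, (g₁ i).eval 0 = 0) (g₂ : Fin (n + 2) → ℂ[X]) :
    C (1 / 2 : ℂ) * (pdot n g₂ g₁ - pdot n g₁ g₂) ∈ Phi := by
  refine ⟨by simp [eval_zero_pdot_of_left hg₁, eval_zero_pdot_of_right _ hg₁], ?_⟩
  rw [cstar, Polynomial.map_mul, Polynomial.map_sub, Polynomial.map_C, ← cstar, ← cstar,
    cstar_pdot, cstar_pdot]
  simp only [one_div, map_inv₀, map_ofNat]
  ring

theorem zero_mem_Delta0 : (0 : Fin (n + 2) → ℂ) ∈ Delta0 n z := by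
  simp [Delta0]

theorem neg_mem_Delta0 {d : Fin (n + 2) → ℂ} (hd : d ∈ Delta0 n z) : -d ∈ Delta0 n z := by
  simp [Delta0, hd.1, hd.2]

theorem add_mem_Delta0 {d₁ d₂ : Fin (n + 2) → ℂ} (hd₁ : d₁ ∈ Delta0 n z)
    (hd₂ : d₂ ∈ Delta0 n z) : d₁ + d₂ ∈ Delta0 n z := by
  simp [Delta0, add_dotProduct, hd₁.1, hd₁.2, hd₂.1, hd₂.2]

theorem zero_mem_DeltaZ : (0 : Fin (n + 2) → ℂ[X]) ∈ DeltaZ n z :=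
  ⟨fun _ => eval_zero, fun _ => zero_mem_Delta0⟩

theorem neg_mem_DeltaZ {g : Fin (n + 2) → ℂ[X]} (hg : g ∈ DeltaZ n z) : -g ∈ DeltaZ n z :=
  ⟨fun i => by simp [hg.1 i], fun k => by
    simp only [Pi.neg_apply, coeff_neg]; exact neg_mem_Delta0 (hg.2 k)⟩

theorem add_mem_DeltaZ {g₁ g₂ : Fin (n + 2) → ℂ[X]} (hg₁ : g₁ ∈ DeltaZ n z)
    (hg₂ : g₂ ∈ DeltaZ n z) : g₁ + g₂ ∈ DeltaZ n z :=
  ⟨fun i => by simp [hg₁.1 i, hg₂.1 i], fun k => by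
    simp only [Pi.add_apply, coeff_add]; exact add_mem_Delta0 (hg₁.2 k) (hg₂.2 k)⟩

theorem apply_zero_of_mem_Delta0 (hz : z ∈ Xi n) {d : Fin (n + 2) → ℂ} (hd : d ∈ Delta0 n z) :
    d 0 = 0 := by
  have h : star d ⬝ᵥ z - star d ⬝ᵥ Dm n *ᵥ z = 2 * star (d 0) := by
    rw [← dotProduct_sub, dotProduct, Finset.sum_eq_single 0]
    · simp only [Pi.star_apply, RCLike.star_def, Dm, Pi.sub_apply, hz.1, mulVec_diagonal,
        ↓reduceIte, mul_one, sub_neg_eq_add]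
      ring
    · intro i _ hi
      simp [Dm, mulVec_diagonal, hi]
    · simp
  rw [hd.1, hd.2, sub_zero, eq_comm, mul_eq_zero] at h
  simpa using h

theorem apply_zero_of_mem_DeltaZ (hz : z ∈ Xi n) {g : Fin (n + 2) → ℂ[X]} (hg : g ∈ DeltaZ n z) :
    g 0 = 0 :=
  Polynomial.ext fun k => apply_zero_of_mem_Delta0 hz (hg.2 k)

theorem map_C_Dm_mulVec_of_apply_zero {v : Fin (n + 2) → ℂ[X]} (hv : v 0 = 0) :
    (Dm n).map C *ᵥ v = v := by
  funext i
  by_cases hi : i = 0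
  · subst hi; simp [Dm, mulVec_diagonal, hv]
  · simp [Dm, mulVec_diagonal, hi]

theorem comp_C_star_dotProduct_mulVec_comp_C (hz : z ∈ Xi n) :
    (C ∘ star z) ⬝ᵥ (Dm n).map C *ᵥ (C ∘ z) = 0 := by
  rw [map_C_mulVec_comp_C, ← RingHom.map_dotProduct, hz.2, map_zero]

theorem cstar_comp_dotProduct_mulVec_comp_C {g : Fin (n + 2) → ℂ[X]} (hg : g ∈ DeltaZ n z) :
    (cstar ∘ g) ⬝ᵥ (Dm n).map C *ᵥ (C ∘ z) = 0 := by
  rw [map_C_mulVec_comp_C]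
  ext k
  rw [coeff_cstar_comp_dotProduct_comp_C, (hg.2 k).2, Polynomial.coeff_zero]

theorem comp_C_star_dotProduct_mulVec_of_mem_DeltaZ (hz : z ∈ Xi n) {g : Fin (n + 2) → ℂ[X]}
    (hg : g ∈ DeltaZ n z) : (C ∘ star z) ⬝ᵥ (Dm n).map C *ᵥ g = 0 := by
  rw [map_C_Dm_mulVec_of_apply_zero (apply_zero_of_mem_DeltaZ hz hg)]
  ext k
  rw [coeff_comp_C_dotProduct, star_dotProduct, (hg.2 k).1, star_zero, Polynomial.coeff_zero]

theorem cstar_comp_dotProduct_mulVec_of_mem_DeltaZ (hz : z ∈ Xi n) (g₁ : Fin (n + 2) → ℂ[X])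
    {g₂ : Fin (n + 2) → ℂ[X]} (hg₂ : g₂ ∈ DeltaZ n z) :
    (cstar ∘ g₁) ⬝ᵥ (Dm n).map C *ᵥ g₂ = pdot n g₁ g₂ := by
  rw [map_C_Dm_mulVec_of_apply_zero (apply_zero_of_mem_DeltaZ hz hg₂), pdot_eq_dotProduct]

theorem Gmat_eq_nilTerm (n : ℕ) (z : Fin (n + 2) → ℂ) (φ : ℂ[X]) (g : Fin (n + 2) → ℂ[X]) :
    Gmat n z φ g = (Dm n).map C *
      nilTerm (φ - C (1 / 2 : ℂ) * pdot n g g) (C ∘ z) (C ∘ star z) g (cstar ∘ g) + 1 := by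
  refine congrArg (fun M => (Dm n).map C * M + 1) (Matrix.ext fun i j => ?_)
  simp only [Matrix.of_apply, nilTerm, Matrix.sub_apply, Matrix.add_apply, Matrix.smul_apply,
    vecMulVec_apply, Function.comp_apply, Pi.star_apply, smul_eq_mul]
  ring

theorem Gmat_mul_Gmat (hz : z ∈ Xi n) {g₁ g₂ : Fin (n + 2) → ℂ[X]} (hg₁ : g₁ ∈ DeltaZ n z)
    (hg₂ : g₂ ∈ DeltaZ n z) (φ₁ φ₂ : ℂ[X]) :
    Gmat n z φ₁ g₁ * Gmat n z φ₂ g₂ =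
      Gmat n z (φ₁ + φ₂ + C (1 / 2 : ℂ) * (pdot n g₂ g₁ - pdot n g₁ g₂)) (g₁ + g₂) := by
  simp only [Gmat_eq_nilTerm]
  rw [nilTerm_group_law _ _ _ (comp_C_star_dotProduct_mulVec_comp_C hz)
    (cstar_comp_dotProduct_mulVec_comp_C hg₁) (comp_C_star_dotProduct_mulVec_of_mem_DeltaZ hz hg₂),
    cstar_comp_dotProduct_mulVec_of_mem_DeltaZ hz g₁ hg₂, cstar_comp_add, pdot_add_add]
  have half : C (1 / 2 : ℂ) * 2 = 1 := by rw [← C_ofNat, ← C_mul]; norm_num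
  congr 3
  linear_combination pdot n g₁ g₂ * half

theorem Gmat_zero_zero : Gmat n z 0 0 = 1 := by
  simp [Gmat_eq_nilTerm, nilTerm, pdot, cstar]

theorem Gmat_mul_Gmat_neg_neg (hz : z ∈ Xi n) (φ : ℂ[X]) {g : Fin (n + 2) → ℂ[X]}
    (hg : g ∈ DeltaZ n z) : Gmat n z φ g * Gmat n z (-φ) (-g) = 1 := by
  rw [Gmat_mul_Gmat hz hg (neg_mem_DeltaZ hg)]
  simpa [pdot, cstar] using Gmat_zero_zero

end Mz

/-- for every `z ∈ Ξ`, the set `M_z = {G_z(φ,g)}` is a group under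
matrix multiplication: `G_z(0,0) = I`, closure under multiplication, and
`G_z(φ,g) · G_z(−φ,−g) = I` with `G_z(−φ,−g) ∈ M_z`. -/
theorem stmt2 (n : ℕ) (z : Fin (n + 2) → ℂ) (hz : z ∈ Xi n) :
    Gmat n z 0 0 = 1 ∧
      (1 : PM n) ∈ Mz n z ∧
      (∀ A ∈ Mz n z, ∀ B ∈ Mz n z, A * B ∈ Mz n z) ∧
      (∀ φ ∈ Phi, ∀ g ∈ DeltaZ n z,
        Gmat n z φ g * Gmat n z (-φ) (-g) = 1 ∧ Gmat n z (-φ) (-g) ∈ Mz n z) := by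
  refine ⟨Gmat_zero_zero, ⟨0, zero_mem_Phi, 0, zero_mem_DeltaZ, Gmat_zero_zero.symm⟩, ?_,
    fun φ hφ g hg => ⟨Gmat_mul_Gmat_neg_neg hz φ hg, -φ, neg_mem_Phi hφ, -g, neg_mem_DeltaZ hg,
      rfl⟩⟩
  rintro _ ⟨φ₁, hφ₁, g₁, hg₁, rfl⟩ _ ⟨φ₂, hφ₂, g₂, hg₂, rfl⟩
  exact ⟨_, add_mem_Phi (add_mem_Phi hφ₁ hφ₂) (half_mul_pdot_sub_pdot_mem_Phi hg₁.1 g₂), _,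
    add_mem_DeltaZ hg₁ hg₂, Gmat_mul_Gmat hz hg₁ hg₂ φ₁ φ₂⟩
end
end

section
/- (Lemma 1.) Let a, b ∈ ℂ^ν satisfy a*Da = 0 and b*Db = 0 (i.e., a, b lie in the cone Λ = {x : x*Dx = 0}). Then a*Db = 0 if and only if a and b are linearly dependent over ℂ (there exist α, β ∈ ℂ, not both zero, with αa + βb = 0). -/
/-!
If `a*Da = b*Db = a*Db = 0`, then, `D` being Hermitian, the form `x*Dx` vanishes on the whole
span of `a` and `b`. The combination `w = b₀ a - a₀ b` has `w₀ = 0`, and on such vectors `x*Dx`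
is the positive definite form `∑ |xᵢ|²`, so `w = 0`; this is a nontrivial relation unless
`a₀ = 0`, in which case `a` itself is isotropic with vanishing first coordinate, hence zero.
-/

open Matrix

noncomputable section

namespace Matrix

variable {R ι : Type*} [Fintype ι]

theorem IsHermitian.star_star_dotProduct_mulVec [CommRing R] [StarRing R] {M : Matrix ι ι R}
    (hM : M.IsHermitian) (x y : ι → R) :
    star (star x ⬝ᵥ M *ᵥ y) = star y ⬝ᵥ M *ᵥ x := by
  rw [star_dotProduct, star_star, star_mulVec, hM.eq, dotProduct_mulVec]

theorem IsHermitian.star_smul_add_smul_dotProduct_mulVec_self_eq_zero [CommRing R] [StarRing R]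
    {M : Matrix ι ι R} (hM : M.IsHermitian) {a b : ι → R} (ha : star a ⬝ᵥ M *ᵥ a = 0)
    (hb : star b ⬝ᵥ M *ᵥ b = 0) (hab : star a ⬝ᵥ M *ᵥ b = 0) (s t : R) :
    star (s • a + t • b) ⬝ᵥ M *ᵥ (s • a + t • b) = 0 := by
  have hba : star b ⬝ᵥ M *ᵥ a = 0 := by
    rw [← hM.star_star_dotProduct_mulVec, hab, star_zero]
  simp only [star_add, star_smul, mulVec_add, mulVec_smul, add_dotProduct, dotProduct_add,
    smul_dotProduct, dotProduct_smul, ha, hb, hab, hba, smul_zero, add_zero]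

theorem star_dotProduct_mulVec_eq_zero_of_dependent [Field R] [StarRing R] (M : Matrix ι ι R)
    {a b : ι → R} (hb : star b ⬝ᵥ M *ᵥ b = 0) {α β : R} (hne : ¬(α = 0 ∧ β = 0))
    (hlin : α • a + β • b = 0) :
    star a ⬝ᵥ M *ᵥ b = 0 := by
  by_cases hα : α = 0
  · have hβ : β ≠ 0 := fun hβ => hne ⟨hα, hβ⟩
    have : b = 0 := by simpa [hα, hβ] using hlin
    simp [this]
  · have : a = (-(α⁻¹ * β)) • b := by
      rw [neg_smul, eq_neg_iff_add_eq_zero, mul_smul, ← inv_smul_smul₀ hα a, ← smul_add, hlin,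
        smul_zero]
    rw [this, star_smul, smul_dotProduct, hb, smul_zero]

end Matrix

theorem isHermitian_Dm (n : ℕ) : (Dm n).IsHermitian :=
  isHermitian_diagonal_iff.mpr fun i => by split_ifs <;> simp [IsSelfAdjoint]

theorem star_dotProduct_Dm_mulVec (n : ℕ) (x y : Fin (n + 2) → ℂ) :
    star x ⬝ᵥ Dm n *ᵥ y = star (Fin.tail x) ⬝ᵥ Fin.tail y - star (x 0) * y 0 := by
  simp only [dotProduct, Pi.star_apply, RCLike.star_def, Dm, mulVec_diagonal, ite_mul, neg_mul,
    one_mul, mul_ite, mul_neg, Fin.sum_univ_succ, ↓reduceIte, Fin.succ_ne_zero, Fin.tail]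
  ring

open scoped ComplexOrder in
theorem eq_zero_of_star_dotProduct_Dm_mulVec_self_eq_zero {n : ℕ} {x : Fin (n + 2) → ℂ}
    (hx : star x ⬝ᵥ Dm n *ᵥ x = 0) (hx0 : x 0 = 0) : x = 0 := by
  rw [star_dotProduct_Dm_mulVec, hx0, mul_zero, sub_zero, dotProduct_star_self_eq_zero] at hx
  funext i
  exact Fin.cases hx0 (congrFun hx) i

/-- Lemma 1: if `a* D a = 0` and `b* D b = 0`, then `a* D b = 0` iff
`a` and `b` are linearly dependent over `ℂ`. -/
theorem stmt13 (n : ℕ) (a b : Fin (n + 2) → ℂ)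
    (ha : star a ⬝ᵥ (Dm n).mulVec a = 0) (hb : star b ⬝ᵥ (Dm n).mulVec b = 0) :
    star a ⬝ᵥ (Dm n).mulVec b = 0 ↔
      ∃ α β : ℂ, ¬(α = 0 ∧ β = 0) ∧ α • a + β • b = 0 := by
  refine ⟨fun hab => ?_, fun ⟨α, β, hne, hlin⟩ =>
    star_dotProduct_mulVec_eq_zero_of_dependent _ hb hne hlin⟩
  by_cases ha0 : a 0 = 0
  · exact ⟨1, 0, by simp, by simp [eq_zero_of_star_dotProduct_Dm_mulVec_self_eq_zero ha ha0]⟩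
  · refine ⟨b 0, -a 0, fun h => ha0 (neg_eq_zero.mp h.2),
      eq_zero_of_star_dotProduct_Dm_mulVec_self_eq_zero
        ((isHermitian_Dm n).star_smul_add_smul_dotProduct_mulVec_self_eq_zero ha hb hab _ _) ?_⟩
    simp only [Pi.add_apply, Pi.smul_apply, smul_eq_mul]
    ring
end
end

section
/- (Lemma 4.) Let y, z ∈ Ξ and let X be a complex ν×ν matrix such that: (a) X·Dz = 0; (b) for every k ∈ Δ_z⁰ the vector X·Dk is a complex scalar multiple of Dy; and (c) y*·X·z = 0. Then there exist vectors s ∈ Δ_z⁰, r ∈ Δ_y⁰ and a scalar α ∈ ℂ such that X = D·(r z* − y s* + α y z*). -/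
/-! Because `z* D z = 0`, the vectors `z` and `D z` are orthogonal of the same length `z* z ≠ 0`, so
every `w` is `(z* w / z* z) z + (z* D w / z* z) D z + D k` with `k ∈ Δ_z⁰`. By (a) and (b),
`X w - (z* w / z* z) X z` is then a multiple of `D y` depending linearly on `w`, i.e.
`X = (X z) z* / (z* z) + (D y) uᵀ`; feeding in `z` and `D z` shows `s := -ū ∈ Δ_z⁰`. Finally
`D X z / (z* z) = r + α y` with `r ⊥ y`, and (c) together with `y* D y = 0` puts `r` in `Δ_y⁰`. -/

open Matrix

noncomputable section

open scoped ComplexOrder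

theorem Matrix.exists_eq_vecMulVec_of_forall_mulVec_eq_smul {K m p : Type*} [Field K] [Fintype p]
    {P : Matrix m p K} {v : m → K} (hv : v ≠ 0) (h : ∀ w, ∃ c : K, P *ᵥ w = c • v) :
    ∃ u, P = vecMulVec v u := by
  classical
  obtain ⟨i, hi⟩ : ∃ i, v i ≠ 0 := Function.ne_iff.mp hv
  refine ⟨fun j => P i j / v i, ?_⟩
  ext k j
  obtain ⟨c, hc⟩ := h (Pi.single j 1)
  rw [mulVec_single_one] at hc
  have hk : P k j = c * v k := congrFun hc k
  have hi' : P i j = c * v i := congrFun hc i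
  rw [vecMulVec_apply, hk, hi']
  field_simp

theorem Matrix.vecMulVec_mulVec_comm {K m p : Type*} [CommSemiring K] [Fintype p]
    (v : m → K) (u w : p → K) : vecMulVec v u *ᵥ w = (u ⬝ᵥ w) • v := by
  rw [vecMulVec_mulVec, op_smul_eq_smul]

section Dm

variable {n : ℕ}

lemma Dm_mul_self : Dm n * Dm n = 1 := by
  rw [Dm, diagonal_mul_diagonal, ← diagonal_one]
  congr 1
  ext i
  split_ifs <;> norm_num

lemma Dm_conjTranspose : (Dm n)ᴴ = Dm n := by
  rw [Dm, diagonal_conjTranspose]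
  congr 1
  ext i
  by_cases h : i = 0 <;> simp [h]

lemma Dm_mulVec_Dm_mulVec (w : Fin (n + 2) → ℂ) : Dm n *ᵥ Dm n *ᵥ w = w := by
  rw [mulVec_mulVec, Dm_mul_self, one_mulVec]

lemma star_Dm_mulVec_dotProduct (v w : Fin (n + 2) → ℂ) :
    star (Dm n *ᵥ v) ⬝ᵥ w = star v ⬝ᵥ Dm n *ᵥ w := by
  rw [star_mulVec, Dm_conjTranspose, dotProduct_mulVec]

lemma Dm_mulVec_ne_zero {w : Fin (n + 2) → ℂ} (hw : w ≠ 0) : Dm n *ᵥ w ≠ 0 := fun h =>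
  hw (by rw [← Dm_mulVec_Dm_mulVec w, h, mulVec_zero])

lemma ne_zero_of_mem_Xi {z : Fin (n + 2) → ℂ} (hz : z ∈ Xi n) : z ≠ 0 := fun h => by
  simpa [h] using hz.1

lemma star_dotProduct_self_ne_zero_of_mem_Xi {z : Fin (n + 2) → ℂ} (hz : z ∈ Xi n) :
    star z ⬝ᵥ z ≠ 0 :=
  dotProduct_star_self_eq_zero.not.mpr (ne_zero_of_mem_Xi hz)

lemma mem_Delta0_iff {z d : Fin (n + 2) → ℂ} :
    d ∈ Delta0 n z ↔ star z ⬝ᵥ d = 0 ∧ star z ⬝ᵥ Dm n *ᵥ d = 0 := by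
  rw [Delta0, Set.mem_ofPred_eq, star_dotProduct d, star_dotProduct d, ← star_Dm_mulVec_dotProduct,
    star_eq_zero, star_eq_zero]

end Dm

lemma Dm_mulVec_sub_mem_Delta0 {n : ℕ} {z : Fin (n + 2) → ℂ} (hzD : star z ⬝ᵥ Dm n *ᵥ z = 0)
    (hN : star z ⬝ᵥ z ≠ 0) (w : Fin (n + 2) → ℂ) :
    Dm n *ᵥ (w - ((star z ⬝ᵥ w) / (star z ⬝ᵥ z)) • z
      - ((star z ⬝ᵥ Dm n *ᵥ w) / (star z ⬝ᵥ z)) • Dm n *ᵥ z) ∈ Delta0 n z := by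
  rw [mem_Delta0_iff, Dm_mulVec_Dm_mulVec]
  simp only [mulVec_sub, mulVec_smul, Dm_mulVec_Dm_mulVec, dotProduct_sub, dotProduct_smul,
    smul_eq_mul, hzD]
  constructor <;> field_simp <;> ring

section

variable {n : ℕ} {y z : Fin (n + 2) → ℂ} {X : Matrix (Fin (n + 2)) (Fin (n + 2)) ℂ}

lemma exists_sub_vecMulVec_mulVec_eq_smul (hz : z ∈ Xi n) (ha : X *ᵥ Dm n *ᵥ z = 0)
    (hb : ∀ k ∈ Delta0 n z, ∃ c : ℂ, X *ᵥ Dm n *ᵥ k = c • Dm n *ᵥ y) (w : Fin (n + 2) → ℂ) :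
    ∃ c : ℂ, (X - vecMulVec ((star z ⬝ᵥ z)⁻¹ • X *ᵥ z) (star z)) *ᵥ w = c • Dm n *ᵥ y := by
  obtain ⟨c, hc⟩ :=
    hb _ (Dm_mulVec_sub_mem_Delta0 hz.2 (star_dotProduct_self_ne_zero_of_mem_Xi hz) w)
  refine ⟨c, ?_⟩
  rw [← hc, Dm_mulVec_Dm_mulVec, sub_mulVec, vecMulVec_mulVec_comm, mulVec_sub, mulVec_sub,
    mulVec_smul, mulVec_smul, ha, smul_zero, sub_zero, smul_smul, div_eq_mul_inv, mul_comm]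

lemma exists_eq_vecMulVec_add_vecMulVec (hy : y ∈ Xi n) (hz : z ∈ Xi n)
    (ha : X *ᵥ Dm n *ᵥ z = 0)
    (hb : ∀ k ∈ Delta0 n z, ∃ c : ℂ, X *ᵥ Dm n *ᵥ k = c • Dm n *ᵥ y) :
    ∃ u, X = vecMulVec ((star z ⬝ᵥ z)⁻¹ • X *ᵥ z) (star z) + vecMulVec (Dm n *ᵥ y) u ∧
      u ⬝ᵥ z = 0 ∧ u ⬝ᵥ Dm n *ᵥ z = 0 := by
  have hDy : Dm n *ᵥ y ≠ 0 := Dm_mulVec_ne_zero (ne_zero_of_mem_Xi hy)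
  obtain ⟨u, hu⟩ := exists_eq_vecMulVec_of_forall_mulVec_eq_smul hDy
    (exists_sub_vecMulVec_mulVec_eq_smul hz ha hb)
  have hu_mulVec (w : Fin (n + 2) → ℂ) :
      (u ⬝ᵥ w) • Dm n *ᵥ y = X *ᵥ w - ((star z ⬝ᵥ w) * (star z ⬝ᵥ z)⁻¹) • X *ᵥ z := by
    rw [← vecMulVec_mulVec_comm, ← hu, sub_mulVec, vecMulVec_mulVec_comm, smul_smul]
  refine ⟨u, (sub_eq_iff_eq_add').mp hu, ?_, ?_⟩
  · have h := hu_mulVec z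
    rw [mul_inv_cancel₀ (star_dotProduct_self_ne_zero_of_mem_Xi hz), one_smul, sub_self,
      smul_eq_zero] at h
    exact h.resolve_right hDy
  · have h := hu_mulVec (Dm n *ᵥ z)
    rw [ha, hz.2, zero_mul, zero_smul, sub_zero, smul_eq_zero] at h
    exact h.resolve_right hDy

lemma exists_Delta0_eq_Dm_mul (hy : y ∈ Xi n) {q u : Fin (n + 2) → ℂ} (hq : star y ⬝ᵥ q = 0)
    (huz : u ⬝ᵥ z = 0) (huDz : u ⬝ᵥ Dm n *ᵥ z = 0) :
    ∃ s ∈ Delta0 n z, ∃ r ∈ Delta0 n y, ∃ α : ℂ,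
      vecMulVec q (star z) + vecMulVec (Dm n *ᵥ y) u = Dm n * (vecMulVec r (star z) -
        vecMulVec y (star s) + α • vecMulVec y (star z)) := by
  set α := (star y ⬝ᵥ Dm n *ᵥ q) / (star y ⬝ᵥ y)
  have hs : -star u ∈ Delta0 n z := by simp [Delta0, huz, huDz]
  have hr : Dm n *ᵥ q - α • y ∈ Delta0 n y := by
    rw [mem_Delta0_iff, mulVec_sub, mulVec_smul, Dm_mulVec_Dm_mulVec, dotProduct_sub,
      dotProduct_sub, dotProduct_smul, dotProduct_smul, hy.2, hq, smul_zero, sub_zero,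
      smul_eq_mul]
    exact ⟨by rw [div_mul_cancel₀ _ (star_dotProduct_self_ne_zero_of_mem_Xi hy), sub_self], rfl⟩
  refine ⟨-star u, hs, Dm n *ᵥ q - α • y, hr, α, ?_⟩
  have h : vecMulVec (Dm n *ᵥ q - α • y) (star z) - vecMulVec y (star (-star u)) +
      α • vecMulVec y (star z) = vecMulVec (Dm n *ᵥ q) (star z) + vecMulVec y u := by
    rw [star_neg, star_star, vecMulVec_neg, sub_vecMulVec, smul_vecMulVec]
    abel
  rw [h, mul_add, mul_vecMulVec, mul_vecMulVec, Dm_mulVec_Dm_mulVec]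

end

/-- Lemma 4: if `y, z ∈ Ξ`, `X D z = 0`, `X D k ∥ D y` for every
`k ∈ Δ_z⁰`, and `y* X z = 0`, then `X = D(r z* − y s* + α y z*)` for some `s ∈ Δ_z⁰`,
`r ∈ Δ_y⁰`, `α ∈ ℂ`. -/
theorem stmt16 (n : ℕ) (y z : Fin (n + 2) → ℂ) (hy : y ∈ Xi n) (hz : z ∈ Xi n)
    (X : Matrix (Fin (n + 2)) (Fin (n + 2)) ℂ)
    (ha : X.mulVec ((Dm n).mulVec z) = 0)
    (hb : ∀ k ∈ Delta0 n z, ∃ c : ℂ, X.mulVec ((Dm n).mulVec k) = c • (Dm n).mulVec y)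
    (hc : star y ⬝ᵥ X.mulVec z = 0) :
    ∃ s ∈ Delta0 n z, ∃ r ∈ Delta0 n y, ∃ α : ℂ,
      X = Dm n * (vecMulVec r (star z) - vecMulVec y (star s) +
        α • vecMulVec y (star z)) := by
  obtain ⟨u, hX, huz, huDz⟩ := exists_eq_vecMulVec_add_vecMulVec hy hz ha hb
  have hq : star y ⬝ᵥ (star z ⬝ᵥ z)⁻¹ • X *ᵥ z = 0 := by rw [dotProduct_smul, hc, smul_zero]
  rw [hX]
  exact exists_Delta0_eq_Dm_mul hy hq huz huDz
end
end
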